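/- Let Σ be an alphabet of cardinality k ≥ 2, let N ≥ 1 be an integer, and let L be a nonempty subset of Σ^N. Set m = |L|, r = ⌊log_k m⌋, and v = 1 + k + k^2 + ⋯ + k^r. If N > 3r + 1, then sc(L) = 2v + m·(N − 2r − 1) + 1 holds if and only if both of the following hold: (a) σ_r(L) = π_r(L) = k^r, and (b) σ_{r+1}(L) = π_{r+1}(L) = m. -/

import Mathlib

/-!
Sort the left quotients of `L` by the length `i` of the word they come from. Apart from the empty
quotient, those at level `i` are nonempty sets of words of length `N - i`, so `sc L` is one plus
the sum of the level counts `q i`. Each `q i` is at most `π i ≤ min (k ^ i) m`; it is also at most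
`σ (N - i) + (m - π i)`, since the quotients at level `i` have sizes summing to `m`, so at most
`m - π i` of them are not singletons, and a singleton quotient is `{s}` for a suffix `s` of length
`N - i`. Summing these bounds over the levels `i ≤ r`, `r < i < N - r` and `N - r ≤ i ≤ N` gives
`sc L ≤ 2v + m (N - 2r - 1) + 1 - (N - 3r - 1) (m - π (N - r - 1))`. For `N > 3r + 1`, equality
therefore forces `π (N - r - 1) = m`, and then equality at every level, which is (a) and (b);
conversely, (a) and (b) make every level bound tight.
-/

/-- The state complexity of a language `L`: the number of distinct left
quotients `p⁻¹L = { s | p ++ s ∈ L }` as `p` ranges over all words (counting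
the empty quotient if it occurs). -/
noncomputable def sc {α : Type*} (L : Set (List α)) : ℕ :=
  Set.ncard { Q : Set (List α) | ∃ p : List α, Q = { s | p ++ s ∈ L } }

/-- `prefixCount L i` is the number of distinct words of length `i` occurring
as prefixes of words of `L` (all words of `L` having length at least `i`). -/
def prefixCount {α : Type*} [DecidableEq α] (L : Finset (List α)) (i : ℕ) : ℕ :=
  (L.image (fun w => w.take i)).card

/-- `suffixCount L i` is the number of distinct words of length `i` occurring
as suffixes of words of `L` (all words of `L` having length at least `i`). -/
def suffixCount {α : Type*} [DecidableEq α] (L : Finset (List α)) (i : ℕ) : ℕ :=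
  (L.image (fun w => w.drop (w.length - i))).card

open Finset

namespace Finset

variable {α : Type*}

lemma card_le_pow_of_forall_length_eq [Fintype α] {s : Finset (List α)} {n : ℕ}
    (h : ∀ w ∈ s, w.length = n) : #s ≤ Fintype.card α ^ n := by
  rw [← filter_true_of_mem h]
  exact card_filter_length_eq_le

variable [DecidableEq α]

lemma card_le_card_image_take_mul_card_image_drop (s : Finset (List α)) (i : ℕ) :
    #s ≤ #(s.image (·.take i)) * #(s.image (·.drop i)) := by
  rw [← card_product]
  refine card_le_card_of_injOn (fun w => (w.take i, w.drop i))
    (fun w hw => mem_product.2 ⟨mem_image_of_mem _ hw, mem_image_of_mem _ hw⟩) ?_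
  intro w _ w' _ h
  simp only [Prod.mk.injEq] at h
  rw [← List.take_append_drop i w, ← List.take_append_drop i w', h.1, h.2]

variable [Fintype α] {s : Finset (List α)} {n i : ℕ}

lemma card_image_take_le_pow (h : ∀ w ∈ s, w.length = n) (hi : i ≤ n) :
    #(s.image (·.take i)) ≤ Fintype.card α ^ i :=
  card_le_pow_of_forall_length_eq <| by
    simp only [mem_image]
    rintro _ ⟨w, hw, rfl⟩
    simp [h w hw, hi]

lemma card_image_drop_le_pow (h : ∀ w ∈ s, w.length = n) :
    #(s.image (·.drop i)) ≤ Fintype.card α ^ (n - i) :=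
  card_le_pow_of_forall_length_eq <| by
    simp only [mem_image]
    rintro _ ⟨w, hw, rfl⟩
    simp [h w hw]

variable [Nonempty α]

lemma card_image_take_eq_pow (h : ∀ w ∈ s, w.length = n) (hs : #s = Fintype.card α ^ n)
    (hi : i ≤ n) : #(s.image (·.take i)) = Fintype.card α ^ i := by
  refine le_antisymm (card_image_take_le_pow h hi) ?_
  refine Nat.le_of_mul_le_mul_right ?_ (pow_pos (Fintype.card_pos (α := α)) (n - i))
  calc Fintype.card α ^ i * Fintype.card α ^ (n - i) = #s := by
        rw [← pow_add, Nat.add_sub_cancel' hi, hs]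
    _ ≤ #(s.image (·.take i)) * #(s.image (·.drop i)) :=
        card_le_card_image_take_mul_card_image_drop s i
    _ ≤ #(s.image (·.take i)) * Fintype.card α ^ (n - i) :=
        Nat.mul_le_mul_left _ (card_image_drop_le_pow h)

lemma card_image_drop_eq_pow (h : ∀ w ∈ s, w.length = n) (hs : #s = Fintype.card α ^ n)
    (hi : i ≤ n) : #(s.image (·.drop i)) = Fintype.card α ^ (n - i) := by
  refine le_antisymm (card_image_drop_le_pow h) ?_
  refine Nat.le_of_mul_le_mul_left ?_ (pow_pos (Fintype.card_pos (α := α)) i)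
  calc Fintype.card α ^ i * Fintype.card α ^ (n - i) = #s := by
        rw [← pow_add, Nat.add_sub_cancel' hi, hs]
    _ ≤ #(s.image (·.take i)) * #(s.image (·.drop i)) :=
        card_le_card_image_take_mul_card_image_drop s i
    _ ≤ Fintype.card α ^ i * #(s.image (·.drop i)) :=
        Nat.mul_le_mul_right _ (card_image_take_le_pow h hi)

end Finset

namespace FiniteLanguage

variable {α : Type*} [DecidableEq α]

def quotient (L : Finset (List α)) (p : List α) : Finset (List α) :=
  (L.filter (p <+: ·)).image (·.drop p.length)

def prefixes (L : Finset (List α)) (i : ℕ) : Finset (List α) := L.image (·.take i)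

def drops (L : Finset (List α)) (i : ℕ) : Finset (List α) := L.image (·.drop i)

def quotientsAt (L : Finset (List α)) (i : ℕ) : Finset (Finset (List α)) :=
  (prefixes L i).image (quotient L)

variable {L : Finset (List α)} {N i j : ℕ} {p s w : List α}

@[simp]
lemma mem_quotient : s ∈ quotient L p ↔ p ++ s ∈ L := by
  simp only [quotient, mem_image, mem_filter]
  constructor
  · rintro ⟨_, ⟨hw, t, rfl⟩, rfl⟩
    simpa using hw
  · exact fun h => ⟨p ++ s, ⟨h, s, rfl⟩, List.drop_left⟩

lemma prefixCount_eq_card_prefixes : prefixCount L i = #(prefixes L i) := rfl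

lemma suffixCount_eq_card_drops (hlen : ∀ w ∈ L, w.length = N) :
    suffixCount L j = #(drops L (N - j)) := by
  unfold suffixCount drops
  congr 1
  exact image_congr fun w hw => by simp only [hlen w hw]

lemma take_mem_prefixes (hw : w ∈ L) : w.take i ∈ prefixes L i := mem_image_of_mem _ hw

lemma drop_mem_quotient_take (hw : w ∈ L) : w.drop i ∈ quotient L (w.take i) := by
  simpa using hw

lemma quotient_nonempty (hp : p ∈ prefixes L i) : (quotient L p).Nonempty := by
  obtain ⟨w, hw, rfl⟩ := mem_image.1 hp
  exact ⟨_, drop_mem_quotient_take hw⟩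

section Length

variable (hlen : ∀ w ∈ L, w.length = N)
include hlen

lemma length_of_mem_prefixes (hi : i ≤ N) (hp : p ∈ prefixes L i) : p.length = i := by
  obtain ⟨w, hw, rfl⟩ := mem_image.1 hp
  simp [hlen w hw, hi]

lemma length_of_mem_drops (hs : s ∈ drops L i) : s.length = N - i := by
  obtain ⟨w, hw, rfl⟩ := mem_image.1 hs
  simp [hlen w hw]

lemma mem_drops_of_mem_quotient (hi : i ≤ N) (hp : p ∈ prefixes L i)
    (hs : s ∈ quotient L p) : s ∈ drops L i :=
  mem_image.2 ⟨p ++ s, mem_quotient.1 hs, List.drop_left' (length_of_mem_prefixes hlen hi hp)⟩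

lemma length_of_mem_quotient (hi : i ≤ N) (hp : p ∈ prefixes L i) (hs : s ∈ quotient L p) :
    s.length = N - i :=
  length_of_mem_drops hlen (mem_drops_of_mem_quotient hlen hi hp hs)

lemma prefixes_self : prefixes L N = L := by
  conv_rhs => rw [← image_id (s := L)]
  exact image_congr fun w hw => by simp [← hlen w hw]

end Length

lemma image_take_prefixes (hij : i ≤ j) : (prefixes L j).image (·.take i) = prefixes L i := by
  simp only [prefixes, image_image, Function.comp_def, List.take_take, min_eq_left hij]

lemma image_drop_drops : (drops L i).image (·.drop j) = drops L (i + j) := by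
  simp only [drops, image_image, Function.comp_def, List.drop_drop]

lemma card_prefixes_le_card : #(prefixes L i) ≤ #L := card_image_le

lemma card_drops_le_card : #(drops L i) ≤ #L := card_image_le

lemma card_quotientsAt_le_card_prefixes : #(quotientsAt L i) ≤ #(prefixes L i) := card_image_le

lemma card_prefixes_mono (hij : i ≤ j) : #(prefixes L i) ≤ #(prefixes L j) := by
  rw [← image_take_prefixes hij]
  exact card_image_le

lemma card_drops_anti (hij : i ≤ j) : #(drops L j) ≤ #(drops L i) := by
  rw [← Nat.add_sub_cancel' hij, ← image_drop_drops]
  exact card_image_le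

lemma card_prefixes_eq_of_le (h : #(prefixes L i) = #L) (hij : i ≤ j) :
    #(prefixes L j) = #L :=
  le_antisymm card_prefixes_le_card (h ▸ card_prefixes_mono hij)

lemma card_drops_eq_of_le (h : #(drops L j) = #L) (hij : i ≤ j) : #(drops L i) = #L :=
  le_antisymm card_drops_le_card (h ▸ card_drops_anti hij)

section Counting

variable (hlen : ∀ w ∈ L, w.length = N) (hi : i ≤ N)
include hlen hi

lemma sum_card_quotient : ∑ p ∈ prefixes L i, #(quotient L p) = #L := by
  rw [card_eq_sum_card_fiberwise (f := (·.take i)) fun w hw => take_mem_prefixes hw]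
  refine sum_congr rfl fun p hp => ?_
  have hp_len := length_of_mem_prefixes hlen hi hp
  refine card_nbij' (p ++ ·) (·.drop i) ?_ ?_ ?_ ?_
  · intro s hs
    simpa [List.take_left' hp_len] using mem_quotient.1 hs
  · intro w hw
    obtain ⟨hw, rfl⟩ := mem_filter.1 hw
    simpa using hw
  · intro s _
    exact List.drop_left' hp_len
  · intro w hw
    obtain ⟨-, rfl⟩ := mem_filter.1 hw
    exact List.take_append_drop i w

lemma card_filter_card_quotient_ne_one_le :
    #((prefixes L i).filter (fun p => #(quotient L p) ≠ 1)) ≤ #L - #(prefixes L i) := by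
  have hpos : ∀ p ∈ prefixes L i, 1 ≤ #(quotient L p) := fun p hp => (quotient_nonempty hp).card_pos
  calc #((prefixes L i).filter (fun p => #(quotient L p) ≠ 1))
      ≤ ∑ p ∈ (prefixes L i).filter (fun p => #(quotient L p) ≠ 1), (#(quotient L p) - 1) := by
        rw [card_eq_sum_ones]
        refine sum_le_sum fun p hp => ?_
        obtain ⟨hp, hne⟩ := mem_filter.1 hp
        have := hpos p hp
        omega
    _ ≤ ∑ p ∈ prefixes L i, (#(quotient L p) - 1) := sum_le_sum_of_subset (filter_subset _ _)
    _ = #L - #(prefixes L i) := by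
        rw [sum_tsub_distrib _ hpos, sum_card_quotient hlen hi, sum_const, smul_eq_mul, mul_one]

lemma card_quotientsAt_le_card_drops_add :
    #(quotientsAt L i) ≤ #(drops L i) + (#L - #(prefixes L i)) := by
  set singletons := (prefixes L i).filter (fun p => #(quotient L p) = 1)
  set others := (prefixes L i).filter (fun p => #(quotient L p) ≠ 1)
  have hsplit : quotientsAt L i = singletons.image (quotient L) ∪ others.image (quotient L) := by
    rw [← image_union, filter_union_filter_not_eq]
    rfl
  have hsingleton : singletons.image (quotient L) ⊆ (drops L i).image ({·}) := by
    intro S hS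
    obtain ⟨p, hp, rfl⟩ := mem_image.1 hS
    obtain ⟨hp, hcard⟩ := mem_filter.1 hp
    obtain ⟨s, hs⟩ := card_eq_one.1 hcard
    rw [hs]
    exact mem_image_of_mem _ (mem_drops_of_mem_quotient hlen hi hp (hs ▸ mem_singleton_self s))
  calc #(quotientsAt L i)
      ≤ #(singletons.image (quotient L)) + #(others.image (quotient L)) :=
        hsplit ▸ card_union_le _ _
    _ ≤ #((drops L i).image ({·})) + #others := add_le_add (card_le_card hsingleton) card_image_le
    _ ≤ #(drops L i) + (#L - #(prefixes L i)) :=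
        add_le_add card_image_le (card_filter_card_quotient_ne_one_le hlen hi)

lemma quotient_take_eq_singleton (hinj : Set.InjOn (fun w : List α => w.take i) L) (hw : w ∈ L) :
    quotient L (w.take i) = {w.drop i} := by
  have hw_len : (w.take i).length = i := by simp [hlen w hw, hi]
  ext s
  rw [mem_quotient, mem_singleton]
  constructor
  · intro hs
    have hws : w.take i ++ s = w := hinj hs hw (List.take_left' hw_len)
    rw [← hws, List.drop_left' hw_len]
  · rintro rfl
    simpa using hw

lemma card_quotientsAt_eq_card_drops (h : #(prefixes L i) = #L) :
    #(quotientsAt L i) = #(drops L i) := by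
  have hinj := injOn_of_card_image_eq h
  have hsingle : quotientsAt L i = (drops L i).image ({·}) := by
    simp only [quotientsAt, prefixes, drops, image_image]
    exact image_congr fun w hw => quotient_take_eq_singleton hlen hi hinj hw
  rw [hsingle, card_image_of_injective _ singleton_injective]

lemma card_quotientsAt_eq_card_prefixes (h : #(drops L i) = #L) :
    #(quotientsAt L i) = #(prefixes L i) := by
  have hinj := injOn_of_card_image_eq h
  refine card_image_of_injOn fun a ha b hb hab => ?_
  obtain ⟨s, hs⟩ := quotient_nonempty ha
  have hbs : s ∈ quotient L b := hab ▸ hs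
  have ha_len := length_of_mem_prefixes hlen hi ha
  have hb_len := length_of_mem_prefixes hlen hi hb
  have hab_s : a ++ s = b ++ s := hinj (mem_quotient.1 hs) (mem_quotient.1 hbs)
    (by simp only [List.drop_left' ha_len, List.drop_left' hb_len])
  exact List.append_cancel_right hab_s

end Counting

lemma coe_quotient : (quotient L p : Set (List α)) = {s | p ++ s ∈ (L : Set (List α))} := by
  ext s
  simp

lemma quotient_mem_quotientsAt_length (hs : s ∈ quotient L p) :
    quotient L p ∈ quotientsAt L p.length := by
  refine mem_image_of_mem _ ?_
  simpa using take_mem_prefixes (i := p.length) (mem_quotient.1 hs)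

section StateComplexity

variable (hlen : ∀ w ∈ L, w.length = N)
include hlen

lemma length_le_of_mem_quotient (hs : s ∈ quotient L p) : p.length ≤ N := by
  have := hlen _ (mem_quotient.1 hs)
  rw [List.length_append] at this
  omega

lemma range_quotient [Nonempty α] :
    Set.range (quotient L) = ↑(insert ∅ ((range (N + 1)).biUnion (quotientsAt L))) := by
  ext Q
  simp only [Set.mem_range, coe_insert, Set.mem_insert_iff, mem_coe, mem_biUnion, mem_range]
  constructor
  · rintro ⟨p, rfl⟩
    rcases (quotient L p).eq_empty_or_nonempty with h | ⟨s, hs⟩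
    · exact Or.inl h
    · exact Or.inr ⟨p.length, Nat.lt_succ_of_le (length_le_of_mem_quotient hlen hs),
        quotient_mem_quotientsAt_length hs⟩
  · rintro (rfl | ⟨i, -, hQ⟩)
    · refine ⟨List.replicate (N + 1) (Classical.arbitrary α),
        eq_empty_of_forall_notMem fun s hs => ?_⟩
      simpa using length_le_of_mem_quotient hlen hs
    · obtain ⟨p, -, rfl⟩ := mem_image.1 hQ
      exact ⟨p, rfl⟩

lemma card_insert_empty_biUnion_quotientsAt :
    #(insert ∅ ((range (N + 1)).biUnion (quotientsAt L))) =
      1 + ∑ i ∈ range (N + 1), #(quotientsAt L i) := by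
  have hempty : ∅ ∉ (range (N + 1)).biUnion (quotientsAt L) := by
    simp only [mem_biUnion, not_exists, not_and]
    intro i _ hQ
    obtain ⟨p, hp, hpQ⟩ := mem_image.1 hQ
    exact (quotient_nonempty hp).ne_empty hpQ
  have hdisj : (range (N + 1) : Set ℕ).PairwiseDisjoint (quotientsAt L) := by
    intro i hi j hj hij
    simp only [coe_range, Set.mem_Iio] at hi hj
    rw [Function.onFun, disjoint_left]
    intro Q hQi hQj
    obtain ⟨p, hp, rfl⟩ := mem_image.1 hQi
    obtain ⟨p', hp', hpp'⟩ := mem_image.1 hQj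
    obtain ⟨s, hs⟩ := quotient_nonempty hp
    have h₁ := length_of_mem_quotient hlen (by omega) hp hs
    have h₂ := length_of_mem_quotient hlen (by omega) hp' (hpp' ▸ hs)
    omega
  rw [card_insert_of_notMem hempty, card_biUnion hdisj, add_comm]

theorem sc_eq_one_add_sum_card_quotientsAt [Nonempty α] :
    sc (L : Set (List α)) = 1 + ∑ i ∈ range (N + 1), #(quotientsAt L i) := by
  have hquot : {Q : Set (List α) | ∃ p, Q = {s | p ++ s ∈ (L : Set (List α))}} =
      (↑) '' Set.range (quotient L) := by
    rw [← Set.range_comp]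
    ext Q
    simp only [Set.mem_range, Function.comp_apply, coe_quotient]
    exact exists_congr fun _ => eq_comm
  rw [sc, hquot, Set.ncard_image_of_injective _ coe_injective, range_quotient hlen,
    Set.ncard_coe_finset, card_insert_empty_biUnion_quotientsAt hlen]

end StateComplexity

section Extremal

/-- The number of nonempty quotients at level `i` in the extremal case: a complete `k`-ary tree on
the levels `i ≤ r`, `m` disjoint paths on the middle levels, and a reversed complete `k`-ary tree on
the levels `i ≥ N - r`. -/
def extremalLevelCard (k m N r i : ℕ) : ℕ :=
  if i ≤ r then k ^ i else if i ≤ N - r - 1 then m else k ^ (N - i)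

lemma sum_range_succ_eq_three_blocks (f : ℕ → ℕ) {N r : ℕ} (h : 2 * r + 1 ≤ N) :
    ∑ i ∈ range (N + 1), f i = ∑ i ∈ range (r + 1), f i + ∑ i ∈ Ico (r + 1) (N - r), f i +
      ∑ i ∈ Ico (N - r) (N + 1), f i := by
  rw [range_eq_Ico, range_eq_Ico, sum_Ico_consecutive _ (Nat.zero_le _) (by omega),
    sum_Ico_consecutive _ (Nat.zero_le _) (by omega)]

lemma sum_Ico_pow_sub {k N r : ℕ} (h : r ≤ N) :
    ∑ i ∈ Ico (N - r) (N + 1), k ^ (N - i) = ∑ i ∈ range (r + 1), k ^ i := by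
  rw [sum_Ico_eq_sum_range, show N + 1 - (N - r) = r + 1 by omega, ← sum_range_reflect]
  refine sum_congr rfl fun j hj => ?_
  rw [mem_range] at hj
  congr 1
  omega

lemma sum_extremalLevelCard {k m N r : ℕ} (h : 2 * r + 1 ≤ N) :
    ∑ i ∈ range (N + 1), extremalLevelCard k m N r i =
      2 * ∑ i ∈ range (r + 1), k ^ i + m * (N - 2 * r - 1) := by
  have hlow : ∑ i ∈ range (r + 1), extremalLevelCard k m N r i = ∑ i ∈ range (r + 1), k ^ i :=
    sum_congr rfl fun i hi => if_pos (Nat.lt_succ_iff.1 (mem_range.1 hi))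
  have hmid : ∑ i ∈ Ico (r + 1) (N - r), extremalLevelCard k m N r i = m * (N - 2 * r - 1) := by
    have hconst : ∀ i ∈ Ico (r + 1) (N - r), extremalLevelCard k m N r i = m := fun i hi => by
      rw [mem_Ico] at hi
      rw [extremalLevelCard, if_neg (by omega), if_pos (by omega)]
    rw [sum_congr rfl hconst, sum_const, Nat.card_Ico, smul_eq_mul, mul_comm]
    congr 1
    omega
  have htop : ∑ i ∈ Ico (N - r) (N + 1), extremalLevelCard k m N r i =
      ∑ i ∈ range (r + 1), k ^ i := by
    rw [← sum_Ico_pow_sub (N := N) (by omega)]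
    refine sum_congr rfl fun i hi => ?_
    rw [mem_Ico] at hi
    rw [extremalLevelCard, if_neg (by omega), if_neg (by omega)]
  rw [sum_range_succ_eq_three_blocks _ (r := r) h, hlow, hmid, htop]
  ring

end Extremal

section Bounds

variable [Fintype α] (hlen : ∀ w ∈ L, w.length = N)
include hlen

lemma card_prefixes_le_pow (hi : i ≤ N) : #(prefixes L i) ≤ Fintype.card α ^ i :=
  card_image_take_le_pow hlen hi

lemma card_drops_le_pow : #(drops L i) ≤ Fintype.card α ^ (N - i) :=
  card_image_drop_le_pow hlen

lemma card_prefixes_eq_pow_of_le [Nonempty α] (h : #(prefixes L j) = Fintype.card α ^ j)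
    (hij : i ≤ j) (hj : j ≤ N) : #(prefixes L i) = Fintype.card α ^ i := by
  rw [← image_take_prefixes hij]
  exact card_image_take_eq_pow (fun p hp => length_of_mem_prefixes hlen hj hp) h hij

lemma card_drops_eq_pow_of_le [Nonempty α] (h : #(drops L j) = Fintype.card α ^ (N - j))
    (hji : j ≤ i) (hi : i ≤ N) : #(drops L i) = Fintype.card α ^ (N - i) := by
  rw [← Nat.add_sub_cancel' hji, ← image_drop_drops,
    card_image_drop_eq_pow (fun s hs => length_of_mem_drops hlen hs) h (by omega)]
  congr 1
  omega

omit [Fintype α] in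
lemma sum_card_sub_card_prefixes_le (hr : r < N) :
    ∑ i ∈ Ico (N - r) (N + 1), (#L - #(prefixes L i)) ≤
      r * (#L - #(prefixes L (N - r - 1))) := by
  rw [sum_Ico_succ_top (by omega), prefixes_self hlen, Nat.sub_self, add_zero]
  calc ∑ i ∈ Ico (N - r) N, (#L - #(prefixes L i))
      ≤ ∑ _i ∈ Ico (N - r) N, (#L - #(prefixes L (N - r - 1))) :=
        sum_le_sum fun i hi => Nat.sub_le_sub_left (card_prefixes_mono (by simp at hi; omega)) _
    _ = r * (#L - #(prefixes L (N - r - 1))) := by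
        rw [sum_const, Nat.card_Ico, smul_eq_mul, show N - (N - r) = r by omega]

lemma sum_card_quotientsAt_le (hNr : 2 * r + 1 ≤ N) :
    ∑ i ∈ range (N + 1), #(quotientsAt L i) ≤
      2 * ∑ i ∈ range (r + 1), Fintype.card α ^ i +
        #(prefixes L (N - r - 1)) * (N - 2 * r - 1) + r * (#L - #(prefixes L (N - r - 1))) := by
  set V := ∑ i ∈ range (r + 1), Fintype.card α ^ i
  set π := #(prefixes L (N - r - 1))
  have hlow : ∑ i ∈ range (r + 1), #(quotientsAt L i) ≤ V :=
    sum_le_sum fun i hi => card_quotientsAt_le_card_prefixes.trans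
      (card_prefixes_le_pow hlen (by simp at hi; omega))
  have hmid : ∑ i ∈ Ico (r + 1) (N - r), #(quotientsAt L i) ≤ π * (N - 2 * r - 1) := by
    calc ∑ i ∈ Ico (r + 1) (N - r), #(quotientsAt L i)
        ≤ ∑ _i ∈ Ico (r + 1) (N - r), π :=
          sum_le_sum fun i hi => card_quotientsAt_le_card_prefixes.trans
            (card_prefixes_mono (by simp at hi; omega))
      _ = π * (N - 2 * r - 1) := by
          rw [sum_const, Nat.card_Ico, smul_eq_mul, mul_comm]
          congr 1
          omega
  have htop : ∑ i ∈ Ico (N - r) (N + 1), #(quotientsAt L i) ≤ V + r * (#L - π) := by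
    calc ∑ i ∈ Ico (N - r) (N + 1), #(quotientsAt L i)
        ≤ ∑ i ∈ Ico (N - r) (N + 1), (Fintype.card α ^ (N - i) + (#L - #(prefixes L i))) :=
          sum_le_sum fun i hi =>
            (card_quotientsAt_le_card_drops_add hlen (by simp at hi; omega)).trans
              (Nat.add_le_add_right (card_drops_le_pow hlen) _)
      _ ≤ V + r * (#L - π) := by
          rw [sum_add_distrib, sum_Ico_pow_sub (by omega)]
          exact Nat.add_le_add_left (sum_card_sub_card_prefixes_le hlen (by omega)) _
  rw [sum_range_succ_eq_three_blocks _ (r := r) hNr]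
  omega

lemma card_prefixes_eq_of_sum_eq (hNr : 3 * r + 1 < N)
    (h : ∑ i ∈ range (N + 1), #(quotientsAt L i) =
      ∑ i ∈ range (N + 1), extremalLevelCard (Fintype.card α) #L N r i) :
    #(prefixes L (N - r - 1)) = #L := by
  have hle := sum_card_quotientsAt_le hlen (r := r) (by omega)
  rw [h, sum_extremalLevelCard (by omega)] at hle
  set π := #(prefixes L (N - r - 1))
  have hπ : π ≤ #L := card_prefixes_le_card
  have hdeficit : (#L - π) * (N - 2 * r - 1) ≤ (#L - π) * r := by
    have hsplit : #L * (N - 2 * r - 1) = π * (N - 2 * r - 1) + (#L - π) * (N - 2 * r - 1) := by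
      rw [← add_mul, Nat.add_sub_cancel' hπ]
    linarith
  have hzero : #L - π = 0 := by
    by_contra hne
    have := Nat.le_of_mul_le_mul_left hdeficit (Nat.pos_of_ne_zero hne)
    omega
  omega

lemma card_quotientsAt_le_extremalLevelCard (h : #(prefixes L (N - r - 1)) = #L) (hi : i ≤ N) :
    #(quotientsAt L i) ≤ extremalLevelCard (Fintype.card α) #L N r i := by
  unfold extremalLevelCard
  split_ifs with hr hmid
  · exact card_quotientsAt_le_card_prefixes.trans (card_prefixes_le_pow hlen hi)
  · exact card_quotientsAt_le_card_prefixes.trans card_prefixes_le_card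
  · have := card_quotientsAt_le_card_drops_add hlen hi
    rw [card_prefixes_eq_of_le h (by omega), Nat.sub_self, add_zero] at this
    exact this.trans (card_drops_le_pow hlen)

lemma card_quotientsAt_eq_extremalLevelCard_of_sum_eq (hNr : 3 * r + 1 < N)
    (h : ∑ i ∈ range (N + 1), #(quotientsAt L i) =
      ∑ i ∈ range (N + 1), extremalLevelCard (Fintype.card α) #L N r i)
    (hi : i ≤ N) : #(quotientsAt L i) = extremalLevelCard (Fintype.card α) #L N r i := by
  have hle : ∀ j ∈ range (N + 1), #(quotientsAt L j) ≤
      extremalLevelCard (Fintype.card α) #L N r j := fun j hj =>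
    card_quotientsAt_le_extremalLevelCard hlen (card_prefixes_eq_of_sum_eq hlen hNr h)
      (Nat.lt_succ_iff.1 (mem_range.1 hj))
  exact (sum_eq_sum_iff_of_le hle).1 h i (mem_range.2 (Nat.lt_succ_of_le hi))

lemma card_drops_prefixes_of_sum_eq (hNr : 3 * r + 1 < N)
    (h : ∑ i ∈ range (N + 1), #(quotientsAt L i) =
      ∑ i ∈ range (N + 1), extremalLevelCard (Fintype.card α) #L N r i) :
    (#(drops L (N - r)) = Fintype.card α ^ r ∧ #(prefixes L r) = Fintype.card α ^ r) ∧
      (#(drops L (N - (r + 1))) = #L ∧ #(prefixes L (r + 1)) = #L) := by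
  have hq : ∀ i ≤ N, #(quotientsAt L i) = extremalLevelCard (Fintype.card α) #L N r i :=
    fun i => card_quotientsAt_eq_extremalLevelCard_of_sum_eq hlen hNr h
  have hdrops : ∀ i, N - r - 1 ≤ i → i ≤ N → #(quotientsAt L i) ≤ #(drops L i) := by
    intro i h₁ h₂
    have := card_quotientsAt_le_card_drops_add hlen h₂
    rwa [card_prefixes_eq_of_le (card_prefixes_eq_of_sum_eq hlen hNr h) h₁, Nat.sub_self,
      add_zero] at this
  have hq_r := hq r (by omega)
  have hq_r1 := hq (r + 1) (by omega)
  have hq_top := hq (N - r) (by omega)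
  have hq_top1 := hq (N - (r + 1)) (by omega)
  simp only [extremalLevelCard] at hq_r hq_r1 hq_top hq_top1
  rw [if_pos le_rfl] at hq_r
  rw [if_neg (by omega), if_pos (by omega)] at hq_r1 hq_top1
  rw [if_neg (by omega), if_neg (by omega), Nat.sub_sub_self (by omega)] at hq_top
  refine ⟨⟨le_antisymm ?_ ?_, le_antisymm ?_ ?_⟩, le_antisymm ?_ ?_, le_antisymm ?_ ?_⟩
  · simpa [Nat.sub_sub_self (by omega : r ≤ N)] using card_drops_le_pow hlen (L := L) (i := N - r)
  · exact hq_top ▸ hdrops _ (by omega) (by omega)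
  · exact card_prefixes_le_pow hlen (by omega)
  · exact hq_r ▸ card_quotientsAt_le_card_prefixes
  · exact card_drops_le_card
  · exact hq_top1 ▸ hdrops _ (by omega) (by omega)
  · exact card_prefixes_le_card
  · exact hq_r1 ▸ card_quotientsAt_le_card_prefixes

lemma card_quotientsAt_eq_extremalLevelCard [Nonempty α] (hNr : 2 * r + 1 ≤ N)
    (hσ_r : #(drops L (N - r)) = Fintype.card α ^ r)
    (hπ_r : #(prefixes L r) = Fintype.card α ^ r)
    (hσ_r1 : #(drops L (N - (r + 1))) = #L) (hπ_r1 : #(prefixes L (r + 1)) = #L) (hi : i ≤ N) :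
    #(quotientsAt L i) = extremalLevelCard (Fintype.card α) #L N r i := by
  unfold extremalLevelCard
  split_ifs with hr hmid
  · rw [card_quotientsAt_eq_card_prefixes hlen hi (card_drops_eq_of_le hσ_r1 (by omega)),
      card_prefixes_eq_pow_of_le hlen hπ_r hr (by omega)]
  · rw [card_quotientsAt_eq_card_prefixes hlen hi (card_drops_eq_of_le hσ_r1 (by omega)),
      card_prefixes_eq_of_le hπ_r1 (by omega)]
  · rw [card_quotientsAt_eq_card_drops hlen hi (card_prefixes_eq_of_le hπ_r1 (by omega)),
      card_drops_eq_pow_of_le hlen (j := N - r) (by rwa [Nat.sub_sub_self (by omega)])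
        (by omega) hi]

theorem sum_card_quotientsAt_eq_sum_extremalLevelCard_iff [Nonempty α] (hNr : 3 * r + 1 < N) :
    ∑ i ∈ range (N + 1), #(quotientsAt L i) =
        ∑ i ∈ range (N + 1), extremalLevelCard (Fintype.card α) #L N r i ↔
      (#(drops L (N - r)) = Fintype.card α ^ r ∧ #(prefixes L r) = Fintype.card α ^ r) ∧
        (#(drops L (N - (r + 1))) = #L ∧ #(prefixes L (r + 1)) = #L) :=
  ⟨card_drops_prefixes_of_sum_eq hlen hNr, fun ⟨⟨hσ_r, hπ_r⟩, hσ_r1, hπ_r1⟩ =>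
    sum_congr rfl fun i hi => card_quotientsAt_eq_extremalLevelCard hlen (by omega)
      hσ_r hπ_r hσ_r1 hπ_r1 (Nat.lt_succ_iff.1 (mem_range.1 hi))⟩

end Bounds

end FiniteLanguage

open FiniteLanguage in
theorem stmt_8_general {α : Type*} [Fintype α] [DecidableEq α]
    (k N : ℕ) (hk : 2 ≤ k) (hcard : Fintype.card α = k)
    (L : Finset (List α)) (hlen : ∀ w ∈ L, w.length = N)
    (m r v : ℕ) (hm : m = L.card)
    (hv : v = ∑ i ∈ Finset.range (r + 1), k ^ i)
    (hNr : 3 * r + 1 < N) :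
    sc (↑L : Set (List α)) = 2 * v + m * (N - 2 * r - 1) + 1 ↔
      (suffixCount L r = k ^ r ∧ prefixCount L r = k ^ r) ∧
      (suffixCount L (r + 1) = m ∧ prefixCount L (r + 1) = m) := by
  subst hcard hm hv
  have : Nonempty α := Fintype.card_pos_iff.1 (by omega)
  simp only [prefixCount_eq_card_prefixes, suffixCount_eq_card_drops hlen]
  rw [sc_eq_one_add_sum_card_quotientsAt hlen, ← sum_extremalLevelCard (by omega), add_comm,
    Nat.add_right_cancel_iff]
  exact sum_card_quotientsAt_eq_sum_extremalLevelCard_iff hlen hNr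

theorem stmt_8 {α : Type*} [Fintype α] [DecidableEq α]
    (k N : ℕ) (hk : 2 ≤ k) (hcard : Fintype.card α = k) (hN : 1 ≤ N)
    (L : Finset (List α)) (hne : L.Nonempty) (hlen : ∀ w ∈ L, w.length = N)
    (m r v : ℕ) (hm : m = L.card) (hr : r = Nat.log k m)
    (hv : v = ∑ i ∈ Finset.range (r + 1), k ^ i)
    (hNr : 3 * r + 1 < N) :
    sc (↑L : Set (List α)) = 2 * v + m * (N - 2 * r - 1) + 1 ↔
      (suffixCount L r = k ^ r ∧ prefixCount L r = k ^ r) ∧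
      (suffixCount L (r + 1) = m ∧ prefixCount L (r + 1) = m) :=
  stmt_8_general k N hk hcard L hlen m r v hm hv hNr
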